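/- arXiv:1910.02415 — 4 statements merged into one kernel-verified Lean document; each statement's English description precedes it below -/
import Mathlib

section
/- If T is a tree on n vertices (n ≥ 2) and T is not isomorphic to the star S_n, then M_2(T) < M_2(S_n) = (n-1)^2. -/
open scoped Classical
noncomputable def M1 {V : Type*} [Fintype V] (G : SimpleGraph V) : ℕ :=
  ∑ v, G.degree v ^ 2
noncomputable def M2 {V : Type*} [Fintype V] (G : SimpleGraph V) : ℕ :=
  ∑ e ∈ G.edgeFinset,
    Sym2.lift ⟨fun u v => G.degree u * G.degree v, fun _ _ => Nat.mul_comm _ _⟩ e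
noncomputable def numEdges {V : Type*} [Fintype V] (G : SimpleGraph V) : ℕ :=
  G.edgeFinset.card
def IsKCyclic {V : Type*} [Fintype V] (k : ℕ) (G : SimpleGraph V) : Prop :=
  G.Connected ∧ G.edgeFinset.card + 1 = Fintype.card V + k
def starGraph (n : ℕ) : SimpleGraph (Fin n) :=
  { Adj := fun u v => u ≠ v ∧ (u.val = 0 ∨ v.val = 0)
    symm := by constructor; intro u v h; exact ⟨h.1.symm, h.2.symm⟩
    loopless := by constructor; intro u h; exact h.1 rfl }
def joinG {α β : Type*} (G : SimpleGraph α) (H : SimpleGraph β) : SimpleGraph (α ⊕ β) :=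
  { Adj := fun u v =>
      match u, v with
      | Sum.inl a, Sum.inl b => G.Adj a b
      | Sum.inr a, Sum.inr b => H.Adj a b
      | Sum.inl _, Sum.inr _ => True
      | Sum.inr _, Sum.inl _ => True
    symm := by
      constructor
      intro u v h
      cases u <;> cases v <;> simp_all [SimpleGraph.adj_comm]
    loopless := by
      constructor
      intro u h
      cases u <;> simp_all }
noncomputable def deleteS {V : Type*} [Fintype V] (G : SimpleGraph V) (S : Finset V) :
    SimpleGraph ↥((↑S : Set V)ᶜ) :=
  G.induce ((↑S : Set V)ᶜ)
def QuasiKCyclic {V : Type*} [Fintype V] (k p : ℕ) (G : SimpleGraph V) : Prop :=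
  G.Connected ∧
  (∃ S : Finset V, S.card = p ∧ IsKCyclic k (deleteS G S)) ∧
  ∀ S' : Finset V, IsKCyclic k (deleteS G S') → p ≤ S'.card
def Un3 (n : ℕ) : SimpleGraph (Fin n) :=
  { Adj := fun u v => u ≠ v ∧ (u.val = 0 ∨ v.val = 0 ∨ (u.val ≤ 2 ∧ v.val ≤ 2))
    symm := by constructor; intro u v h; tauto
    loopless := by constructor; intro u h; exact h.1 rfl }
def Bn33 (n : ℕ) : SimpleGraph (Fin n) :=
  { Adj := fun u v => u ≠ v ∧ (u.val = 0 ∨ v.val = 0 ∨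
      (1 ≤ u.val ∧ u.val ≤ 2 ∧ 1 ≤ v.val ∧ v.val ≤ 2) ∨
      (3 ≤ u.val ∧ u.val ≤ 4 ∧ 3 ≤ v.val ∧ v.val ≤ 4))
    symm := by constructor; intro u v h; tauto
    loopless := by constructor; intro u h; exact h.1 rfl }

/-!
Writing `S v` for the sum of the degrees of the neighbours of `v`, double counting gives
`2 M₂(G) = ∑ᵥ d(v) S(v)`. In a triangle-free graph the edges at distinct neighbours of `v` are
distinct, so `S v ≤ |E|`, whence `M₂(G) ≤ |E|²`. In a tree on `n` vertices `|E| = n - 1`, and for a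
leaf `x` with neighbour `y` we have `S x = d(y) < n - 1` unless `y` is adjacent to every other
vertex, which makes the tree a star; as `d(x) > 0`, the bound is then strict.
-/

theorem starGraph_eq_simpleGraph_starGraph {n : ℕ} (hn : 0 < n) :
    starGraph n = SimpleGraph.starGraph (⟨0, hn⟩ : Fin n) := by
  ext u w
  simp [starGraph, Fin.ext_iff]

namespace SimpleGraph

open Finset

variable {V W : Type*} (G : SimpleGraph V)

theorem eq_starGraph_of_isUniversal (hG : G.CliqueFree 3) {r : V} (hr : G.IsUniversal r) :
    G = starGraph r := by
  ext u w
  rw [starGraph_adj]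
  refine ⟨fun h => ⟨h.ne, ?_⟩, ?_⟩
  · by_contra! hne
    exact isIndepSet_neighborSet_of_triangleFree G hG r (hr hne.1.symm) (hr hne.2.symm) h.ne h
  · rintro ⟨hne, rfl | rfl⟩
    exacts [hr hne, (hr hne.symm).symm]

def starGraphCongr (e : V ≃ W) (r : V) : starGraph r ≃g starGraph (e r) :=
  { e with map_rel_iff' := by simp [e.injective.eq_iff] }

variable [Fintype V]

theorem nonempty_iso_starGraph_of_isUniversal {n : ℕ} (hcard : Fintype.card V = n)
    (hG : G.CliqueFree 3) {r : V} (hr : G.IsUniversal r) : Nonempty (G ≃g _root_.starGraph n) := by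
  have hpos : 0 < n := hcard ▸ Fintype.card_pos_iff.mpr ⟨r⟩
  let e₀ := Fintype.equivFinOfCardEq hcard
  let e := e₀.trans (Equiv.swap (e₀ r) ⟨0, hpos⟩)
  have he : e r = ⟨0, hpos⟩ := by simp [e]
  rw [G.eq_starGraph_of_isUniversal hG hr, starGraph_eq_simpleGraph_starGraph hpos, ← he]
  exact ⟨starGraphCongr e r⟩

section

variable [DecidableRel G.Adj] {M : Type*} [AddCommMonoid M]

theorem sum_darts_edge (f : Sym2 V → M) :
    ∑ d : G.Dart, f d.edge = 2 • ∑ e ∈ G.edgeFinset, f e := by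
  rw [← sum_fiberwise_of_maps_to (g := Dart.edge) (t := G.edgeFinset)
    (fun d _ => G.mem_edgeFinset.mpr d.edge_mem), smul_sum]
  refine sum_congr rfl fun e he => ?_
  rw [sum_congr rfl fun d hd => congrArg f (mem_filter.mp hd).2, sum_const,
    G.dart_edge_fiber_card e (G.mem_edgeFinset.mp he)]

theorem sum_darts_eq_sum_neighborFinset (g : V → V → M) :
    ∑ d : G.Dart, g d.fst d.snd = ∑ v, ∑ u ∈ G.neighborFinset v, g v u := by
  rw [← sum_fiberwise univ (fun d : G.Dart => d.fst)]
  refine sum_congr rfl fun v _ => ?_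
  rw [G.dart_fst_fiber v, sum_image fun _ _ _ _ h => G.dartOfNeighborSet_injective v h]
  exact (sum_subtype _ (fun _ => Set.mem_toFinset) (g v)).symm

theorem sum_degree_neighborFinset_le_card_edgeFinset (hG : G.CliqueFree 3) (v : V) :
    ∑ u ∈ G.neighborFinset v, G.degree u ≤ #G.edgeFinset := by
  have hdisj : (G.neighborFinset v : Set V).PairwiseDisjoint fun u => G.incidenceFinset u := by
    intro x hx y hy hxy
    rw [Function.onFun, ← disjoint_coe, coe_incidenceFinset, coe_incidenceFinset,
      Set.disjoint_iff_inter_eq_empty]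
    have hind := isIndepSet_neighborSet_of_triangleFree G hG v
    exact G.incidenceSet_inter_incidenceSet_of_not_adj
      (hind (by simpa using hx) (by simpa using hy) hxy) hxy
  calc ∑ u ∈ G.neighborFinset v, G.degree u
      = #((G.neighborFinset v).biUnion fun u => G.incidenceFinset u) := by
        rw [card_biUnion hdisj]
        simp only [card_incidenceFinset_eq_degree]
    _ ≤ #G.edgeFinset := card_le_card (biUnion_subset.2 fun u _ => G.incidenceFinset_subset u)

end

theorem two_mul_M2 :
    2 * M2 G = ∑ v, G.degree v * ∑ u ∈ G.neighborFinset v, G.degree u := by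
  simp_rw [mul_sum, ← sum_darts_eq_sum_neighborFinset]
  rw [M2, ← smul_eq_mul, ← sum_darts_edge]
  rfl

theorem M2_lt_sq_card_edgeFinset (hG : G.CliqueFree 3) {x : V} (hx : 0 < G.degree x)
    (hS : ∑ u ∈ G.neighborFinset x, G.degree u < #G.edgeFinset) :
    M2 G < #G.edgeFinset ^ 2 := by
  have h : 2 * M2 G < 2 * (#G.edgeFinset * #G.edgeFinset) :=
    calc 2 * M2 G = ∑ v, G.degree v * ∑ u ∈ G.neighborFinset v, G.degree u := G.two_mul_M2
      _ < ∑ v, G.degree v * #G.edgeFinset :=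
        sum_lt_sum
          (fun v _ => Nat.mul_le_mul_left _ (G.sum_degree_neighborFinset_le_card_edgeFinset hG v))
          ⟨x, mem_univ x, Nat.mul_lt_mul_of_pos_left hS hx⟩
      _ = 2 * (#G.edgeFinset * #G.edgeFinset) := by
        rw [← sum_mul, sum_degrees_eq_twice_card_edges, mul_assoc]
  rw [sq]
  exact Nat.lt_of_mul_lt_mul_left h

-- `M2` is stated with the classical decidability instances and the library's lemmas on
-- `starGraph` with its own, hence the `convert`s.
theorem M2_starGraph (r : V) : M2 (starGraph r) = (Fintype.card V - 1) ^ 2 := by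
  have hE := (isTree_starGraph r).card_edgeFinset
  rw [M2, sum_const_nat fun e he => ?_, sq]
  · convert congrArg (· * (Fintype.card V - 1)) (Nat.eq_sub_of_add_eq hE) using 4
  · induction e using Sym2.ind with
    | _ u v =>
      simp only [mem_edgeFinset, mem_edgeSet, starGraph_adj] at he
      rw [Sym2.lift_mk]
      rcases he with ⟨hne, rfl | rfl⟩
      · convert Nat.mul_one (Fintype.card V - 1) using 3
        · convert degree_starGraph_center (r := u)
        · convert degree_starGraph_of_ne_center hne.symm
      · convert Nat.one_mul (Fintype.card V - 1) using 3
        · convert degree_starGraph_of_ne_center hne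
        · convert degree_starGraph_center (r := v)

end SimpleGraph

theorem stmt2 {V : Type*} [Fintype V] {n : ℕ} (hn : 2 ≤ n) (hcard : Fintype.card V = n)
    (T : SimpleGraph V) (hT : T.IsTree) (hiso : ¬ Nonempty (T ≃g starGraph n)) :
    M2 T < M2 (starGraph n) ∧ M2 (starGraph n) = (n - 1) ^ 2 := by
  have hstar : M2 (starGraph n) = (n - 1) ^ 2 := by
    rw [starGraph_eq_simpleGraph_starGraph (by omega), SimpleGraph.M2_starGraph, Fintype.card_fin]
  refine ⟨?_, hstar⟩
  have hE : T.edgeFinset.card = n - 1 := by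
    have := hT.card_edgeFinset
    omega
  have htri : T.CliqueFree 3 := hT.isAcyclic.cliqueFree le_rfl
  have : Nontrivial V := Fintype.one_lt_card_iff_nontrivial.mp (by omega)
  obtain ⟨x, hx⟩ := hT.exists_vert_degree_one_of_nontrivial
  obtain ⟨y, hxy⟩ := Finset.card_eq_one.mp ((T.card_neighborFinset_eq_degree x).trans hx)
  have hy : T.degree y < n - 1 := by
    rw [← hcard, T.degree_lt_card_sub_one]
    exact fun hy => hiso (T.nonempty_iso_starGraph_of_isUniversal hcard htri hy)
  rw [hstar, ← hE]
  exact T.M2_lt_sq_card_edgeFinset htri (x := x) (by omega) (by rwa [hxy, Finset.sum_singleton, hE])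
end

section
/- Let G be a connected simple graph on n vertices, S ⊆ V(G) with |S| = p, and suppose G − S is a k-cyclic graph on n − p vertices (i.e., |E(G−S)| = (n−p) − 1 + k). Then M_1(G) ≤ M_1(G−S) + p(4k + n^2 + 2n + p(n−4) − p^2 − 3), with equality if and only if every vertex of S is adjacent to all other n−1 vertices of G. -/
open scoped Classical
/-!
A vertex of `S` has degree at most `n - 1`, and a vertex outside `S` has degree at most its degree
in `G - S` plus `p`. Summing the squares of these bounds and using that the degrees of `G - S` add
up to twice its `n - p - 1 + k` edges gives the right-hand side. Equality forces every vertex of `S`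
to be universal, and universal vertices of `S` make the bound at every other vertex tight as well.
-/

open Finset

namespace Finset

lemma sum_univ_eq_sum_add_sum_compl_subtype {V M : Type*} [Fintype V] [AddCommMonoid M]
    (S : Finset V) (f : V → M) :
    ∑ v, f v = ∑ v ∈ S, f v + ∑ w : ↥(↑S : Set V)ᶜ, f w := by
  rw [← sum_add_sum_compl S f, sum_subtype Sᶜ (p := (· ∈ (↑S : Set V)ᶜ)) (by simp)]

end Finset

namespace SimpleGraph

variable {V : Type*} [Fintype V]

lemma degree_deleteS_add_card_inter (G : SimpleGraph V) (S : Finset V) (w : ↥(↑S : Set V)ᶜ) :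
    (deleteS G S).degree w + #(G.neighborFinset w ∩ S) = G.degree w := by
  have hmap := G.map_neighborFinset_induce w
  rw [Set.toFinset_compl, Finset.toFinset_coe, ← sdiff_eq_inter_compl] at hmap
  have hdeg : (deleteS G S).degree w = #(G.neighborFinset w \ S) := by
    rw [← hmap, card_map, card_neighborFinset_eq_degree]
    rfl
  rw [hdeg, add_comm, card_inter_add_card_sdiff, card_neighborFinset_eq_degree]

lemma sum_sq_degree_add_const (H : SimpleGraph V) (c : ℤ) :
    ∑ v, ((H.degree v : ℤ) + c) ^ 2 =
      M1 H + 4 * c * #H.edgeFinset + Fintype.card V * c ^ 2 := by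
  have hdeg : ∑ v, (H.degree v : ℤ) = 2 * #H.edgeFinset := by
    exact_mod_cast H.sum_degrees_eq_twice_card_edges
  simp only [add_sq, sum_add_distrib, ← sum_mul, ← mul_sum, hdeg, M1, sum_const, card_univ,
    nsmul_eq_mul]
  push_cast
  ring

lemma sq_degree_le (G : SimpleGraph V) (v : V) :
    (G.degree v : ℤ) ^ 2 ≤ ((Fintype.card V : ℤ) - 1) ^ 2 := by
  have := G.degree_lt_card_verts v
  gcongr
  all_goals omega

lemma sq_degree_eq_iff (G : SimpleGraph V) (v : V) :
    (G.degree v : ℤ) ^ 2 = ((Fintype.card V : ℤ) - 1) ^ 2 ↔ G.IsUniversal v := by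
  have := G.degree_lt_card_verts v
  rw [← degree_eq_card_sub_one, sq_eq_sq₀ (by positivity) (by omega)]
  omega

lemma sum_sq_degree_le (G : SimpleGraph V) (S : Finset V) :
    ∑ v ∈ S, (G.degree v : ℤ) ^ 2 ≤ #S * ((Fintype.card V : ℤ) - 1) ^ 2 := by
  simpa using sum_le_sum fun v _ ↦ G.sq_degree_le v

lemma sum_sq_degree_eq_iff (G : SimpleGraph V) (S : Finset V) :
    ∑ v ∈ S, (G.degree v : ℤ) ^ 2 = #S * ((Fintype.card V : ℤ) - 1) ^ 2 ↔
      ∀ v ∈ S, G.IsUniversal v := by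
  rw [← nsmul_eq_mul, ← sum_const, sum_eq_sum_iff_of_le fun v _ ↦ G.sq_degree_le v]
  simp only [sq_degree_eq_iff]

lemma sum_sq_degree_compl_le (G : SimpleGraph V) (S : Finset V) :
    ∑ w : ↥(↑S : Set V)ᶜ, (G.degree w : ℤ) ^ 2 ≤
      ∑ w : ↥(↑S : Set V)ᶜ, ((deleteS G S).degree w + #S : ℤ) ^ 2 := by
  refine sum_le_sum fun w _ ↦ ?_
  rw [← G.degree_deleteS_add_card_inter S w]
  have : #(G.neighborFinset w ∩ S) ≤ #S := card_le_card inter_subset_right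
  push_cast
  gcongr

lemma sum_sq_degree_compl_eq (G : SimpleGraph V) (S : Finset V)
    (hS : ∀ v ∈ S, G.IsUniversal v) :
    ∑ w : ↥(↑S : Set V)ᶜ, (G.degree w : ℤ) ^ 2 =
      ∑ w : ↥(↑S : Set V)ᶜ, ((deleteS G S).degree w + #S : ℤ) ^ 2 := by
  refine sum_congr rfl fun w _ ↦ ?_
  have hinter : G.neighborFinset w ∩ S = S := by
    refine inter_eq_right.mpr fun v hv ↦ ?_
    rw [mem_neighborFinset, adj_comm]
    exact hS v hv fun h ↦ w.2 (h ▸ hv)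
  rw [← G.degree_deleteS_add_card_inter S w, hinter]
  push_cast
  rfl

end SimpleGraph

theorem stmt8_general {V : Type*} [Fintype V] {n p k : ℕ} (G : SimpleGraph V)
    (hcard : Fintype.card V = n) (S : Finset V) (hS : S.card = p)
    (hk : IsKCyclic k (deleteS G S)) :
    (M1 G : ℤ) ≤ (M1 (deleteS G S) : ℤ)
        + p * (4 * k + (n : ℤ) ^ 2 + 2 * n + p * ((n : ℤ) - 4) - (p : ℤ) ^ 2 - 3) ∧
    ((M1 G : ℤ) = (M1 (deleteS G S) : ℤ)
        + p * (4 * k + (n : ℤ) ^ 2 + 2 * n + p * ((n : ℤ) - 4) - (p : ℤ) ^ 2 - 3) ↔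
      ∀ v ∈ S, G.degree v = n - 1) := by
  subst hcard hS
  have hsplit : (M1 G : ℤ) = ∑ v ∈ S, (G.degree v : ℤ) ^ 2 +
      ∑ w : ↥(↑S : Set V)ᶜ, (G.degree w : ℤ) ^ 2 := by
    rw [M1]
    push_cast
    exact sum_univ_eq_sum_add_sum_compl_subtype S _
  have hcompl_le :=
    (G.sum_sq_degree_compl_le S).trans_eq ((deleteS G S).sum_sq_degree_add_const #S)
  have hcardW : Fintype.card ↥(↑S : Set V)ᶜ + #S = Fintype.card V := by
    simp only [Fintype.card_compl_set, coe_sort_coe, Fintype.card_coe]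
    have := card_le_univ S
    omega
  have hedges : (#(deleteS G S).edgeFinset : ℤ) + 1 = Fintype.card ↥(↑S : Set V)ᶜ + k := by
    exact_mod_cast hk.2
  have hbound : (#S : ℤ) * ((Fintype.card V : ℤ) - 1) ^ 2 + (M1 (deleteS G S) +
      4 * #S * #(deleteS G S).edgeFinset + Fintype.card ↥(↑S : Set V)ᶜ * (#S : ℤ) ^ 2) =
      M1 (deleteS G S) + #S * (4 * k + (Fintype.card V : ℤ) ^ 2 + 2 * Fintype.card V +
        #S * ((Fintype.card V : ℤ) - 4) - (#S : ℤ) ^ 2 - 3) := by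
    rw [← hcardW]
    push_cast
    linear_combination (4 * (#S : ℤ)) * hedges
  simp only [SimpleGraph.degree_eq_card_sub_one]
  refine ⟨by linarith [G.sum_sq_degree_le S], ⟨fun h ↦ ?_, fun h ↦ ?_⟩⟩
  · rw [← G.sum_sq_degree_eq_iff]
    linarith [G.sum_sq_degree_le S]
  · rw [hsplit, (G.sum_sq_degree_eq_iff S).mpr h, G.sum_sq_degree_compl_eq S h,
      (deleteS G S).sum_sq_degree_add_const, ← hbound]

theorem stmt8 {V : Type*} [Fintype V] {n p k : ℕ} (G : SimpleGraph V)
    (hcard : Fintype.card V = n) (hconn : G.Connected) (S : Finset V) (hS : S.card = p)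
    (hk : IsKCyclic k (deleteS G S)) :
    (M1 G : ℤ) ≤ (M1 (deleteS G S) : ℤ)
        + p * (4 * k + (n : ℤ) ^ 2 + 2 * n + p * ((n : ℤ) - 4) - (p : ℤ) ^ 2 - 3) ∧
    ((M1 G : ℤ) = (M1 (deleteS G S) : ℤ)
        + p * (4 * k + (n : ℤ) ^ 2 + 2 * n + p * ((n : ℤ) - 4) - (p : ℤ) ^ 2 - 3) ↔
      ∀ v ∈ S, G.degree v = n - 1) :=
  stmt8_general G hcard S hS hk
end

section
/- Let H be a graph on n−p vertices maximizing M_1 among all k-cyclic graphs on n−p vertices. Then among all connected graphs G on n vertices admitting a p-element vertex subset S with G − S k-cyclic, the maximum of M_1(G) equals M_1(H) + p(4k + n^2 + 2n + p(n−4) − p^2 − 3), attained by G = H + K_p. -/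
open scoped Classical
/-!
Split `M1 G` over `S` and its complement. A vertex of `S` has degree at most `n - 1`, and a vertex
`x` outside `S` has degree at most `d_{G-S}(x) + p`. Expanding
`∑ (d_{G-S}(x) + p)² = M1(G - S) + 4p|E(G - S)| + (n - p)p²` and using `|E(G - S)| = n - p + k - 1`
together with `M1(G - S) ≤ M1(H)` gives the bound. In `H + K_p` every one of these estimates is
an equality: the vertices of `K_p` are universal and those of `H` gain exactly `p` neighbours.
-/

open Finset

namespace SimpleGraph

variable {V W : Type*} [Fintype V] [Fintype W]

lemma Iso.M1_eq {G : SimpleGraph V} {G' : SimpleGraph W} (e : G ≃g G') : M1 G = M1 G' := by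
  unfold M1
  exact Fintype.sum_equiv e.toEquiv _ _ fun v => congrArg (· ^ 2) (e.degree_eq v).symm

lemma Iso.isKCyclic {k : ℕ} {G : SimpleGraph V} {G' : SimpleGraph W} (e : G ≃g G')
    (hG : IsKCyclic k G) : IsKCyclic k G' :=
  ⟨e.connected_iff.mp hG.1, by
    rw [← e.card_edgeFinset_eq, ← Fintype.card_congr e.toEquiv]; exact hG.2⟩

lemma M1_le_of_isKCyclic {k m : ℕ} {H : SimpleGraph (Fin m)}
    (hmax : ∀ H' : SimpleGraph (Fin m), IsKCyclic k H' → M1 H' ≤ M1 H)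
    {X : SimpleGraph V} (hV : Fintype.card V = m) (hX : IsKCyclic k X) : M1 X ≤ M1 H := by
  rw [(X.overFinIso hV).M1_eq]
  exact hmax _ ((X.overFinIso hV).isKCyclic hX)

lemma sum_sq_degree_add (G : SimpleGraph V) (c : ℕ) :
    ∑ v, (G.degree v + c) ^ 2 = M1 G + 4 * c * #G.edgeFinset + Fintype.card V * c ^ 2 := by
  simp only [add_sq, sum_add_distrib, ← sum_mul, ← mul_sum,
    sum_degrees_eq_twice_card_edges, sum_const, card_univ, smul_eq_mul, M1]
  ring

lemma _root_.IsKCyclic.sum_sq_degree_add_eq {k p n : ℕ} {X : SimpleGraph V} (hX : IsKCyclic k X)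
    (hn : Fintype.card V + p = n) :
    ((∑ v, (X.degree v + p) ^ 2 + p * (n - 1) ^ 2 : ℕ) : ℤ) = M1 X
      + p * (4 * k + (n : ℤ) ^ 2 + 2 * n + p * ((n : ℤ) - 4) - (p : ℤ) ^ 2 - 3) := by
  have hV : 1 ≤ Fintype.card V := Fintype.card_pos_iff.mpr hX.1.nonempty
  have hE : (#X.edgeFinset : ℤ) = Fintype.card V + k - 1 := by have := hX.2; omega
  rw [sum_sq_degree_add, ← hn]
  push_cast [Nat.cast_sub (by omega : 1 ≤ Fintype.card V + p), hE]
  ring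

lemma degree_le_degree_deleteS_add_card [DecidableEq V] (G : SimpleGraph V) (S : Finset V)
    (x : ↥((↑S : Set V)ᶜ)) : G.degree x ≤ (deleteS G S).degree x + #S := by
  rw [← card_neighborFinset_eq_degree, ← card_neighborFinset_eq_degree,
    ← card_map (Function.Embedding.subtype _)]
  refine (card_le_card fun u hu => ?_).trans (card_union_le _ S)
  by_cases huS : u ∈ S
  · exact mem_union_right _ huS
  · refine mem_union_left _ (mem_map.mpr ⟨⟨u, by simpa using huS⟩, ?_, rfl⟩)
    rw [mem_neighborFinset] at hu ⊢
    exact hu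

lemma M1_le_deleteS [DecidableEq V] (G : SimpleGraph V) (S : Finset V) :
    M1 G ≤ ∑ x : ↥((↑S : Set V)ᶜ), ((deleteS G S).degree x + #S) ^ 2
      + #S * (Fintype.card V - 1) ^ 2 := by
  rw [M1, ← sum_add_sum_compl S, add_comm]
  gcongr
  · rw [sum_subtype Sᶜ (p := (· ∈ (↑S : Set V)ᶜ)) fun _ => by simp]
    gcongr with x
    exact G.degree_le_degree_deleteS_add_card S x
  · rw [← smul_eq_mul]
    exact sum_le_card_nsmul _ _ _ fun v _ =>
      Nat.pow_le_pow_left (Nat.le_sub_one_of_lt (G.degree_lt_card_verts v)) 2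

lemma degree_completeGraph (v : V) [Fintype ((completeGraph V).neighborSet v)] :
    (completeGraph V).degree v = Fintype.card V - 1 := by
  convert complete_graph_degree v

variable (G : SimpleGraph V) (H : SimpleGraph W)

lemma degree_joinG_inl (a : V) : (joinG G H).degree (.inl a) = G.degree a + Fintype.card W := by
  rw [← card_neighborFinset_eq_degree, ← card_neighborFinset_eq_degree, ← card_univ,
    ← card_disjSum]
  congr 1
  ext (b | b) <;> simp only [mem_neighborFinset, inl_mem_disjSum, inr_mem_disjSum, mem_univ] <;> rfl

lemma degree_joinG_inr (b : W) : (joinG G H).degree (.inr b) = H.degree b + Fintype.card V := by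
  rw [← card_neighborFinset_eq_degree, ← card_neighborFinset_eq_degree, ← card_univ,
    add_comm, ← card_disjSum]
  congr 1
  ext (a | a) <;> simp only [mem_neighborFinset, inl_mem_disjSum, inr_mem_disjSum, mem_univ] <;> rfl

lemma M1_joinG : M1 (joinG G H) =
    ∑ a, (G.degree a + Fintype.card W) ^ 2 + ∑ b, (H.degree b + Fintype.card V) ^ 2 := by
  simp only [M1, Fintype.sum_sum_type, degree_joinG_inl, degree_joinG_inr]

end SimpleGraph

theorem stmt10 {m p k : ℕ} (n : ℕ) (hn : n = m + p)
    (H : SimpleGraph (Fin m)) (hH : IsKCyclic k H)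
    (hmax : ∀ H' : SimpleGraph (Fin m), IsKCyclic k H' → M1 H' ≤ M1 H) :
    (∀ G : SimpleGraph (Fin n), G.Connected →
      (∃ S : Finset (Fin n), S.card = p ∧ IsKCyclic k (deleteS G S)) →
      (M1 G : ℤ) ≤ (M1 H : ℤ)
        + p * (4 * k + (n : ℤ) ^ 2 + 2 * n + p * ((n : ℤ) - 4) - (p : ℤ) ^ 2 - 3)) ∧
    (M1 (joinG H (SimpleGraph.completeGraph (Fin p))) : ℤ) = (M1 H : ℤ)
        + p * (4 * k + (n : ℤ) ^ 2 + 2 * n + p * ((n : ℤ) - 4) - (p : ℤ) ^ 2 - 3) := by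
  refine ⟨fun G _ ⟨S, hS, hGS⟩ => ?_, ?_⟩
  · have hcard : Fintype.card ↥((↑S : Set (Fin n))ᶜ) + p = n := by
      rw [Fintype.card_compl_set]
      simp [hS, hn]
    have hM1 := SimpleGraph.M1_le_deleteS G S
    rw [hS, Fintype.card_fin] at hM1
    calc (M1 G : ℤ)
        ≤ ((∑ x, ((deleteS G S).degree x + p) ^ 2 + p * (n - 1) ^ 2 : ℕ) : ℤ) := by
          exact_mod_cast hM1
      _ = M1 (deleteS G S)
          + p * (4 * k + (n : ℤ) ^ 2 + 2 * n + p * ((n : ℤ) - 4) - (p : ℤ) ^ 2 - 3) :=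
          hGS.sum_sq_degree_add_eq hcard
      _ ≤ _ := by
          gcongr
          exact_mod_cast SimpleGraph.M1_le_of_isKCyclic hmax (by omega) hGS
  · have hK : p * (p - 1 + m) ^ 2 = p * (n - 1) ^ 2 := by
      rcases p with _ | p
      · simp
      · congr 2
        omega
    simp only [SimpleGraph.M1_joinG, SimpleGraph.degree_completeGraph, Fintype.card_fin,
      sum_const, card_univ, smul_eq_mul, hK]
    exact hH.sum_sq_degree_add_eq (by rw [Fintype.card_fin, hn])
end

section
/- For n ≥ p + 2, the graph S_{n−p} + K_p (the join of the star on n−p vertices with the complete graph K_p) has the maximum first Zagreb index M_1 among all p-quasi trees on n vertices, i.e., among all connected graphs G on n vertices such that there exists S ⊆ V(G) with |S| = p and G − S a tree, and no smaller set whose removal leaves a tree. -/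
open scoped Classical
/-!
Let `S` be a set of `p` vertices whose removal leaves a tree `T` on `k = n - p` vertices. Every
vertex of `S` has degree at most `n - 1`, and every other vertex `w` has degree at most
`d_T(w) + p`. Since `∑ d_T = 2(k - 1)` and, `T` being triangle-free, `d_T(u) + d_T(v) ≤ k` along
every edge, which gives `∑ d_T² ≤ k(k - 1)`, the resulting bound on `M₁(G)` is exactly
`M₁(S_k + K_p)`, where the same estimates hold with equality.
-/

open Finset

namespace SimpleGraph

variable {V : Type*} [Fintype V]

theorem sum_sum_neighborFinset (G : SimpleGraph V) [DecidableRel G.Adj] {M : Type*}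
    [AddCommMonoid M] (f : V → M) :
    ∑ v, ∑ u ∈ G.neighborFinset v, f u = ∑ u, G.degree u • f u := by
  rw [sum_comm' (t' := univ) (s' := fun u => G.neighborFinset u) (by simp [adj_comm])]
  simp_rw [sum_const, card_neighborFinset_eq_degree]

theorem CliqueFree.degree_add_degree_le [DecidableEq V] {G : SimpleGraph V} [DecidableRel G.Adj]
    (h : G.CliqueFree 3) {u v : V} (huv : G.Adj u v) :
    G.degree u + G.degree v ≤ Fintype.card V := by
  have hdisj : Disjoint (G.neighborFinset u) (G.neighborFinset v) := by
    refine Finset.disjoint_left.2 fun w hwu hwv => ?_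
    rw [mem_neighborFinset] at hwu hwv
    exact isIndepSet_neighborSet_of_triangleFree G h w hwu.symm hwv.symm huv.ne huv
  rw [← card_neighborFinset_eq_degree, ← card_neighborFinset_eq_degree,
    ← card_union_of_disjoint hdisj]
  exact card_le_univ _

theorem CliqueFree.sum_degree_sq_le [DecidableEq V] {G : SimpleGraph V} [DecidableRel G.Adj]
    (h : G.CliqueFree 3) :
    ∑ v, G.degree v ^ 2 ≤ Fintype.card V * #G.edgeFinset := by
  suffices 2 * ∑ v, G.degree v ^ 2 ≤ 2 * (#G.edgeFinset * Fintype.card V) by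
    rw [mul_comm (Fintype.card V)]
    omega
  calc 2 * ∑ v, G.degree v ^ 2
      = ∑ v, ∑ u ∈ G.neighborFinset v, (G.degree u + G.degree v) := by
        simp_rw [sum_add_distrib, G.sum_sum_neighborFinset, sum_const,
          card_neighborFinset_eq_degree, smul_eq_mul, ← sum_add_distrib, mul_sum]
        ring_nf
    _ ≤ ∑ v, ∑ u ∈ G.neighborFinset v, Fintype.card V :=
        sum_le_sum fun v _ => sum_le_sum fun u hu =>
          h.degree_add_degree_le (G.adj_symm ((mem_neighborFinset G v u).1 hu))
    _ = 2 * (#G.edgeFinset * Fintype.card V) := by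
        rw [G.sum_sum_neighborFinset, ← sum_smul, sum_degrees_eq_twice_card_edges,
          smul_eq_mul, mul_assoc]

theorem IsTree.sum_degree_add_sq_le [DecidableEq V] {G : SimpleGraph V} [DecidableRel G.Adj]
    (hG : G.IsTree) (p : ℕ) :
    ∑ v, (G.degree v + p) ^ 2 ≤ (#G.edgeFinset + p) ^ 2 + #G.edgeFinset * (p + 1) ^ 2 := by
  have hsq := (hG.isAcyclic.cliqueFree le_rfl).sum_degree_sq_le
  have hexpand : ∑ v, (G.degree v + p) ^ 2
      = ∑ v, G.degree v ^ 2 + 2 * p * ∑ v, G.degree v + Fintype.card V * p ^ 2 := by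
    simp_rw [add_sq, sum_add_distrib, ← sum_mul, ← mul_sum, sum_const, card_univ, smul_eq_mul]
    ring
  rw [hexpand, sum_degrees_eq_twice_card_edges, ← hG.card_edgeFinset]
  rw [← hG.card_edgeFinset] at hsq
  nlinarith

variable [DecidableEq V] (G : SimpleGraph V)

theorem degree_le_degree_induce_compl_add_card (S : Finset V) (v : V) (hv : v ∈ (↑S : Set V)ᶜ) :
    G.degree v ≤ (G.induce (↑S : Set V)ᶜ).degree ⟨v, hv⟩ + #S := by
  have hsub : G.neighborFinset v ⊆
      ((G.induce (↑S : Set V)ᶜ).neighborFinset ⟨v, hv⟩).map (Function.Embedding.subtype _) ∪ S := by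
    intro u hu
    by_cases huS : u ∈ S
    · exact mem_union_right _ huS
    · refine mem_union_left _ (mem_map.2 ⟨⟨u, huS⟩, ?_, rfl⟩)
      simpa using hu
  rw [← card_neighborFinset_eq_degree, ← card_neighborFinset_eq_degree]
  exact (card_le_card hsub).trans ((card_union_le _ _).trans_eq (by rw [card_map]))

theorem M1_le_sum_induce_compl (S : Finset V) :
    M1 G ≤ ∑ w, ((G.induce (↑S : Set V)ᶜ).degree w + #S) ^ 2
      + #S * (Fintype.card V - 1) ^ 2 := by
  rw [M1, ← sum_compl_add_sum S]
  refine add_le_add ?_ ?_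
  · rw [sum_subtype Sᶜ (p := (· ∈ (↑S : Set V)ᶜ)) (by simp)]
    exact sum_le_sum fun w _ =>
      Nat.pow_le_pow_left (G.degree_le_degree_induce_compl_add_card S w w.2) 2
  · rw [← smul_eq_mul]
    exact sum_le_card_nsmul _ _ _ fun v _ =>
      Nat.pow_le_pow_left (Nat.le_sub_one_of_lt (G.degree_lt_card_verts v)) 2

end SimpleGraph

theorem isKCyclic_zero_iff_isTree {V : Type*} [Fintype V] {G : SimpleGraph V} :
    IsKCyclic 0 G ↔ G.IsTree := by
  rw [SimpleGraph.isTree_iff_connected_and_card, IsKCyclic, SimpleGraph.edgeFinset_card,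
    Nat.card_eq_fintype_card, Nat.card_eq_fintype_card, add_zero]

theorem QuasiKCyclic.exists_isTree_induce_compl {V : Type*} [Fintype V] {p : ℕ}
    {G : SimpleGraph V} (hG : QuasiKCyclic 0 p G) :
    ∃ S : Finset V, #S = p ∧ (G.induce (↑S : Set V)ᶜ).IsTree := by
  obtain ⟨-, ⟨S, hS, hT⟩, -⟩ := hG
  exact ⟨S, hS, isKCyclic_zero_iff_isTree.1 hT⟩

section Join

variable {α β : Type*} [Fintype α] [Fintype β] (G : SimpleGraph α) (H : SimpleGraph β)

theorem degree_joinG_inl [DecidableRel G.Adj] (a : α) :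
    (joinG G H).degree (Sum.inl a) = G.degree a + Fintype.card β := by
  have : (joinG G H).neighborFinset (Sum.inl a) = (G.neighborFinset a).disjSum univ := by
    ext (x | x) <;> rw [SimpleGraph.mem_neighborFinset] <;> simp [joinG]
  rw [← SimpleGraph.card_neighborFinset_eq_degree, this, card_disjSum, card_univ,
    SimpleGraph.card_neighborFinset_eq_degree]

theorem degree_joinG_inr [DecidableRel H.Adj] (b : β) :
    (joinG G H).degree (Sum.inr b) = H.degree b + Fintype.card α := by
  have : (joinG G H).neighborFinset (Sum.inr b) = univ.disjSum (H.neighborFinset b) := by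
    ext (x | x) <;> rw [SimpleGraph.mem_neighborFinset] <;> simp [joinG]
  rw [← SimpleGraph.card_neighborFinset_eq_degree, this, card_disjSum, card_univ,
    SimpleGraph.card_neighborFinset_eq_degree, add_comm]

theorem M1_joinG [DecidableRel G.Adj] [DecidableRel H.Adj] : M1 (joinG G H) =
    ∑ a, (G.degree a + Fintype.card β) ^ 2 + ∑ b, (H.degree b + Fintype.card α) ^ 2 := by
  simp only [M1, Fintype.sum_sum_type, degree_joinG_inl, degree_joinG_inr]

end Join

theorem degree_starGraph_zero (k : ℕ) : (starGraph (k + 1)).degree 0 = k := by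
  have : (starGraph (k + 1)).neighborFinset 0 = univ.erase 0 := by
    ext v
    rw [SimpleGraph.mem_neighborFinset]
    simp [starGraph, eq_comm]
  rw [← SimpleGraph.card_neighborFinset_eq_degree, this, card_erase_of_mem (mem_univ _),
    card_univ, Fintype.card_fin, Nat.add_sub_cancel]

theorem degree_starGraph_succ {k : ℕ} (i : Fin k) : (starGraph (k + 1)).degree i.succ = 1 := by
  have : (starGraph (k + 1)).neighborFinset i.succ = {0} := by
    ext v
    rw [SimpleGraph.mem_neighborFinset, mem_singleton]
    change i.succ ≠ v ∧ (i.succ.val = 0 ∨ v.val = 0) ↔ v = 0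
    refine ⟨fun ⟨_, h⟩ => Fin.ext (h.resolve_left (by simp)), ?_⟩
    rintro rfl
    exact ⟨Fin.succ_ne_zero i, Or.inr rfl⟩
  rw [← SimpleGraph.card_neighborFinset_eq_degree, this, card_singleton]

theorem M1_joinG_starGraph_completeGraph (k p : ℕ) :
    M1 (joinG (starGraph (k + 1)) (SimpleGraph.completeGraph (Fin p)))
      = (k + p) ^ 2 + k * (p + 1) ^ 2 + p * (k + p) ^ 2 := by
  rw [M1_joinG, Fin.sum_univ_succ, degree_starGraph_zero]
  simp only [degree_starGraph_succ, SimpleGraph.complete_graph_degree, Fintype.card_fin,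
    sum_const, card_univ, smul_eq_mul]
  rcases p with _ | p
  · simp
  · simp only [Nat.add_sub_cancel]
    ring

theorem stmt11_general {n p : ℕ} (G : SimpleGraph (Fin n))
    (hG : QuasiKCyclic 0 p G) :
    M1 G ≤ M1 (joinG (starGraph (n - p)) (SimpleGraph.completeGraph (Fin p))) := by
  obtain ⟨S, rfl, hT⟩ := hG.exists_isTree_induce_compl
  set c := #(G.induce (↑S : Set (Fin n))ᶜ).edgeFinset
  have hc : n - #S = c + 1 := by
    have h := hT.card_edgeFinset
    simp only [Fintype.card_compl_set, Fintype.card_fin, Finset.coe_sort_coe,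
      Fintype.card_coe] at h
    omega
  rw [hc, M1_joinG_starGraph_completeGraph]
  calc M1 G ≤ ∑ w, ((G.induce (↑S : Set (Fin n))ᶜ).degree w + #S) ^ 2 + #S * (n - 1) ^ 2 := by
        simpa only [Fintype.card_fin] using G.M1_le_sum_induce_compl S
    _ ≤ (c + #S) ^ 2 + c * (#S + 1) ^ 2 + #S * (n - 1) ^ 2 :=
        add_le_add_left (hT.sum_degree_add_sq_le #S) _
    _ = (c + #S) ^ 2 + c * (#S + 1) ^ 2 + #S * (c + #S) ^ 2 := by
        rw [show n - 1 = c + #S by omega]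

theorem stmt11 {n p : ℕ} (hn : p + 2 ≤ n) (G : SimpleGraph (Fin n))
    (hG : QuasiKCyclic 0 p G) :
    M1 G ≤ M1 (joinG (starGraph (n - p)) (SimpleGraph.completeGraph (Fin p))) :=
  stmt11_general G hG
end
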